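/- Under the block-sampling scheme where block U_{t_k} is chosen with probability ‖Â_{:,U_{t_k}}‖_F²/‖Â‖_F² and z^{(k+1)} = (I − Â_{:,U_{t_k}}Â_{:,U_{t_k}}ᵀ/‖Â_{:,U_{t_k}}‖_F²) z^{(k)}, the expectation satisfies 𝔼[z^{(k+1)}] = (I − ÂÂᵀ/‖Â‖_F²)^{k+1} z^{(0)}. -/
import Mathlib

open Matrix

noncomputable def blockFrobSq {M N : ℕ} (Ahat : Matrix (Fin M) (Fin N) ℝ)
    (U : Finset (Fin N)) : ℝ :=
  ∑ j ∈ U, ∑ a, (Ahat a j) ^ 2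

noncomputable def blockOuter {M N : ℕ} (Ahat : Matrix (Fin M) (Fin N) ℝ)
    (U : Finset (Fin N)) : Matrix (Fin M) (Fin M) ℝ :=
  Matrix.of fun a b => ∑ j ∈ U, Ahat a j * Ahat b j

noncomputable def frobSq {M N : ℕ} (Ahat : Matrix (Fin M) (Fin N) ℝ) : ℝ :=
  ∑ a, ∑ j, (Ahat a j) ^ 2

/-- The iterate `z^{(k)}` as a function of the sequence of chosen block indices. -/
noncomputable def zIter {M N t : ℕ} (Ahat : Matrix (Fin M) (Fin N) ℝ)
    (U : Fin (t + 1) → Finset (Fin N)) (z0 : Fin M → ℝ)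
    (ω : ℕ → Fin (t + 1)) : ℕ → (Fin M → ℝ)
  | 0 => z0
  | k + 1 =>
      (1 - (blockFrobSq Ahat (U (ω k)))⁻¹ • blockOuter Ahat (U (ω k))).mulVec
        (zIter Ahat U z0 ω k)

lemma zIter_congr {M N t : ℕ} (Ahat : Matrix (Fin M) (Fin N) ℝ)
    (U : Fin (t + 1) → Finset (Fin N)) (z0 : Fin M → ℝ)
    (ω ω' : ℕ → Fin (t + 1)) : ∀ n, (∀ l, l < n → ω l = ω' l) →
    zIter Ahat U z0 ω n = zIter Ahat U z0 ω' n := by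
  intro n
  induction n with
  | zero => intro; rfl
  | succ n ih =>
    intro h
    simp only [zIter, h n (Nat.lt_succ_self n),
      ih (fun l hl => h l (hl.trans (Nat.lt_succ_self n)))]

lemma sum_mulVec' {M : ℕ} {ι : Type*} (s : Finset ι) (f : ι → Matrix (Fin M) (Fin M) ℝ)
    (w : Fin M → ℝ) : (∑ i ∈ s, f i) *ᵥ w = ∑ i ∈ s, f i *ᵥ w := by
  induction s using Finset.cons_induction with
  | empty => simp
  | cons i s hi ih => simp [Matrix.add_mulVec, ih]

lemma mulVec_sum' {M : ℕ} {ι : Type*} (s : Finset ι) (A : Matrix (Fin M) (Fin M) ℝ)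
    (v : ι → Fin M → ℝ) : A *ᵥ (∑ i ∈ s, v i) = ∑ i ∈ s, A *ᵥ v i := by
  induction s using Finset.cons_induction with
  | empty => simp
  | cons i s hi ih => simp [Matrix.mulVec_add, ih]

lemma frobSq_eq_sum {M N t : ℕ} (Ahat : Matrix (Fin M) (Fin N) ℝ)
    (U : Fin (t + 1) → Finset (Fin N))
    (hdisj : ∀ i j, i ≠ j → Disjoint (U i) (U j))
    (hcover : Finset.univ.biUnion U = Finset.univ) :
    frobSq Ahat = ∑ i, blockFrobSq Ahat (U i) := by
  unfold frobSq blockFrobSq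
  rw [Finset.sum_comm, ← hcover, Finset.sum_biUnion]
  intro i _ j _ hij
  exact hdisj i j hij

lemma outer_eq_sum {M N t : ℕ} (Ahat : Matrix (Fin M) (Fin N) ℝ)
    (U : Fin (t + 1) → Finset (Fin N))
    (hdisj : ∀ i j, i ≠ j → Disjoint (U i) (U j))
    (hcover : Finset.univ.biUnion U = Finset.univ) :
    Ahat * Ahatᵀ = ∑ i, blockOuter Ahat (U i) := by
  ext a b
  simp only [Matrix.mul_apply, Matrix.transpose_apply, Matrix.sum_apply, blockOuter,
    Matrix.of_apply]
  rw [← hcover, Finset.sum_biUnion]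
  intro i _ j _ hij
  exact hdisj i j hij

theorem stmt10 {M N t : ℕ} (Ahat : Matrix (Fin M) (Fin N) ℝ)
    (U : Fin (t + 1) → Finset (Fin N))
    (hdisj : ∀ i j, i ≠ j → Disjoint (U i) (U j))
    (hcover : Finset.univ.biUnion U = Finset.univ)
    (hpos : ∀ i, 0 < blockFrobSq Ahat (U i))
    (z0 : Fin M → ℝ) (k : ℕ) :
    -- expectation of `z^{(k+1)}` over the independent choices of the first k+1 indices,
    -- index i drawn with probability ‖Â_{:,U i}‖_F² / ‖Â‖_F²
    (∑ s : Fin (k + 1) → Fin (t + 1),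
        (∏ j, blockFrobSq Ahat (U (s j)) / frobSq Ahat) •
          zIter Ahat U z0 (fun l => if h : l < k + 1 then s ⟨l, h⟩ else 0) (k + 1))
      = ((1 - (frobSq Ahat)⁻¹ • (Ahat * Ahatᵀ)) ^ (k + 1)).mulVec z0 := by
  have hF : frobSq Ahat = ∑ i, blockFrobSq Ahat (U i) := frobSq_eq_sum Ahat U hdisj hcover
  have hFpos : 0 < frobSq Ahat := by
    rw [hF]
    exact Finset.sum_pos (fun i _ => hpos i) Finset.univ_nonempty
  have hFne : frobSq Ahat ≠ 0 := ne_of_gt hFpos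
  -- key: expected one-step matrix
  have hkey : ∀ w : Fin M → ℝ,
      (∑ i : Fin (t + 1), (blockFrobSq Ahat (U i) / frobSq Ahat) •
        (1 - (blockFrobSq Ahat (U i))⁻¹ • blockOuter Ahat (U i)).mulVec w)
      = (1 - (frobSq Ahat)⁻¹ • (Ahat * Ahatᵀ)).mulVec w := by
    intro w
    have this1 : ∀ i : Fin (t + 1),
        (blockFrobSq Ahat (U i) / frobSq Ahat) •
          (1 - (blockFrobSq Ahat (U i))⁻¹ • blockOuter Ahat (U i))
        = ((blockFrobSq Ahat (U i) / frobSq Ahat) • (1 : Matrix (Fin M) (Fin M) ℝ))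
          - (frobSq Ahat)⁻¹ • blockOuter Ahat (U i) := by
      intro i
      rw [smul_sub, smul_smul]
      congr 2
      rw [div_mul_eq_mul_div, mul_inv_cancel₀ (ne_of_gt (hpos i)), one_div]
    have hm : (∑ i : Fin (t + 1), (blockFrobSq Ahat (U i) / frobSq Ahat) •
        (1 - (blockFrobSq Ahat (U i))⁻¹ • blockOuter Ahat (U i)))
        = 1 - (frobSq Ahat)⁻¹ • (Ahat * Ahatᵀ) := by
      rw [Finset.sum_congr rfl fun i _ => this1 i, Finset.sum_sub_distrib,
        ← Finset.sum_smul, ← Finset.smul_sum, ← outer_eq_sum Ahat U hdisj hcover,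
        ← Finset.sum_div, ← hF, div_self hFne, one_smul]
    rw [← hm, sum_mulVec']
    exact Finset.sum_congr rfl fun i _ => (Matrix.smul_mulVec _ _ _).symm
  -- generalized claim by induction
  suffices h : ∀ n : ℕ,
      (∑ s : Fin n → Fin (t + 1),
        (∏ j, blockFrobSq Ahat (U (s j)) / frobSq Ahat) •
          zIter Ahat U z0 (fun l => if h : l < n then s ⟨l, h⟩ else 0) n)
      = ((1 - (frobSq Ahat)⁻¹ • (Ahat * Ahatᵀ)) ^ n).mulVec z0 by
    exact h (k + 1)
  intro n
  induction n with
  | zero =>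
    simp [zIter, Matrix.one_mulVec]
  | succ n ih =>
    rw [← Equiv.sum_comp (Fin.snocEquiv (fun _ => Fin (t + 1)))]
    rw [Fintype.sum_prod_type]
    have hstep : ∀ (i : Fin (t + 1)) (s' : Fin n → Fin (t + 1)),
        (∏ j, blockFrobSq Ahat (U ((Fin.snocEquiv (fun _ => Fin (t+1)) (i, s')) j)) / frobSq Ahat) •
          zIter Ahat U z0 (fun l => if h : l < n + 1 then
            (Fin.snocEquiv (fun _ => Fin (t+1)) (i, s')) ⟨l, h⟩ else 0) (n + 1)
        = (blockFrobSq Ahat (U i) / frobSq Ahat) •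
            ((∏ j, blockFrobSq Ahat (U (s' j)) / frobSq Ahat) •
              (1 - (blockFrobSq Ahat (U i))⁻¹ • blockOuter Ahat (U i)).mulVec
                (zIter Ahat U z0 (fun l => if h : l < n then s' ⟨l, h⟩ else 0) n)) := by
      intro i s'
      have hsnoc : (Fin.snocEquiv (fun _ => Fin (t+1)) (i, s')) = Fin.snoc s' i := by
        ext j
        simp [Fin.snocEquiv, Fin.snoc]
      rw [hsnoc]
      have hlast : (fun l => if h : l < n + 1 then (Fin.snoc s' i : Fin (n+1) → Fin (t+1)) ⟨l, h⟩ else 0) n = i := by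
        simp [Fin.snoc]
      have hrest : zIter Ahat U z0 (fun l => if h : l < n + 1 then
            (Fin.snoc s' i : Fin (n+1) → Fin (t+1)) ⟨l, h⟩ else 0) n
          = zIter Ahat U z0 (fun l => if h : l < n then s' ⟨l, h⟩ else 0) n := by
        apply zIter_congr
        intro l hl
        simp only [dif_pos hl, dif_pos (hl.trans (Nat.lt_succ_self n))]
        have : (⟨l, hl.trans (Nat.lt_succ_self n)⟩ : Fin (n+1)) = Fin.castSucc ⟨l, hl⟩ := rfl
        rw [this, Fin.snoc_castSucc]
      show (∏ j : Fin (n+1), blockFrobSq Ahat (U ((Fin.snoc s' i : Fin (n+1) → Fin (t+1)) j)) / frobSq Ahat) •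
          ((1 - (blockFrobSq Ahat (U ((fun l => if h : l < n + 1 then (Fin.snoc s' i : Fin (n+1) → Fin (t+1)) ⟨l, h⟩ else 0) n)))⁻¹ •
            blockOuter Ahat (U ((fun l => if h : l < n + 1 then (Fin.snoc s' i : Fin (n+1) → Fin (t+1)) ⟨l, h⟩ else 0) n))).mulVec _) = _
      rw [hlast, hrest]
      have hp : (∏ j : Fin (n+1), blockFrobSq Ahat (U ((Fin.snoc s' i : Fin (n+1) → Fin (t+1)) j)) / frobSq Ahat)
          = (∏ j : Fin n, blockFrobSq Ahat (U (s' j)) / frobSq Ahat) * (blockFrobSq Ahat (U i) / frobSq Ahat) := by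
        have := Fin.prod_snoc (f := fun j : Fin n => blockFrobSq Ahat (U (s' j)) / frobSq Ahat)
          (x := blockFrobSq Ahat (U i) / frobSq Ahat)
        rw [← this]
        apply Finset.prod_congr rfl
        intro j _
        induction j using Fin.lastCases with
        | last => simp
        | cast j => simp
      rw [hp, smul_smul, mul_comm ((∏ j, blockFrobSq Ahat (U (s' j)) / frobSq Ahat)) (blockFrobSq Ahat (U i) / frobSq Ahat)]
    rw [Finset.sum_congr rfl fun i _ => Finset.sum_congr rfl fun s' _ => hstep i s']
    have : ∀ i : Fin (t + 1),
        (∑ s' : Fin n → Fin (t + 1), (blockFrobSq Ahat (U i) / frobSq Ahat) •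
          ((∏ j, blockFrobSq Ahat (U (s' j)) / frobSq Ahat) •
            (1 - (blockFrobSq Ahat (U i))⁻¹ • blockOuter Ahat (U i)).mulVec
              (zIter Ahat U z0 (fun l => if h : l < n then s' ⟨l, h⟩ else 0) n)))
        = (blockFrobSq Ahat (U i) / frobSq Ahat) •
            (1 - (blockFrobSq Ahat (U i))⁻¹ • blockOuter Ahat (U i)).mulVec
              (((1 - (frobSq Ahat)⁻¹ • (Ahat * Ahatᵀ)) ^ n).mulVec z0) := by
      intro i
      rw [← Finset.smul_sum]
      congr 1
      rw [← ih, Finset.sum_congr rfl fun s' _ => (Matrix.mulVec_smul _ _ _).symm,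
        ← mulVec_sum']
    rw [Finset.sum_congr rfl fun i _ => this i, hkey, pow_succ',
      ← Matrix.mulVec_mulVec]
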